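/- Fix p₁, p₂ ∈ (0,1). Consider maximizing (1−k)θ₁θ₂ over triples (k,θ₁,θ₂) with k ∈ [0,1), θ₁, θ₂ ∈ [0,1], subject to the two constraints k + (1−k)h(θᵢ) = pᵢ for i = 1,2. Then every maximizer has k = 0; that is, with two buyers whose priors have possibly different means p₁ and p₂, the seller-worst information structure gives each buyer a truncated Pareto signal distribution with virtual values {0,1}. -/

import Mathlib

/-!
Write `1 - h θ = θ + (1 - θ) log (1 - θ)`; the bound `-log (1 - x) > 2x / (2 - x)` makes
`(1 - h θ) / θ²` strictly increasing on `(0, 1]`. Hence for `s = √(1 - k) < 1` the constraint value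
`k + (1 - k) h θ = 1 - s² (1 - h θ)` lies strictly below `h (s θ)`, so the signal `τ` solving the
same constraint at `k = 0` satisfies `τ > s θ`. Then `τ₁ τ₂ > s² θ₁ θ₂ = (1 - k) θ₁ θ₂`: any
`k > 0` is beaten by `k = 0`.
-/

/-- `h 1 = 0` holds because `Real.log 0 = 0`. -/
noncomputable def h (θ : ℝ) : ℝ := (1 - θ) * (1 - Real.log (1 - θ))

open Set Real

namespace Real

theorem two_mul_div_add_two_lt_log_one_add {a : ℝ} (ha : 0 < a) :
    2 * a / (a + 2) < log (1 + a) := by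
  have hsum := hasSum_log_one_add ha.le
  have hle := sum_le_hasSum (Finset.range 2) (fun i _ => by positivity) hsum
  have hcube : 0 < 2 * (1 / 3) * (a / (a + 2)) ^ 3 := by positivity
  simp only [Finset.sum_range_succ, Finset.sum_range_zero] at hle
  norm_num at hle
  linarith [show 2 * a / (a + 2) = 2 * (a / (a + 2)) by ring]

theorem two_mul_div_two_sub_lt_neg_log_one_sub {x : ℝ} (hx0 : 0 < x) (hx1 : x < 1) :
    2 * x / (2 - x) < -log (1 - x) := by
  have key := two_mul_div_add_two_lt_log_one_add (div_pos hx0 (sub_pos.2 hx1))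
  have hx1' : 1 - x ≠ 0 := by linarith
  have h2 : 2 - x ≠ 0 := by linarith
  have e1 : 1 + x / (1 - x) = (1 - x)⁻¹ := by field_simp; ring
  have e2 : 2 * (x / (1 - x)) / (x / (1 - x) + 2) = 2 * x / (2 - x) := by
    have : x / (1 - x) + 2 = (2 - x) / (1 - x) := by field_simp; ring
    rw [this]
    field_simp
  rwa [e1, e2, log_inv] at key

end Real

theorem continuous_h : Continuous h := by
  have : h = fun θ => (1 - θ) - (1 - θ) * log (1 - θ) := by funext θ; simp only [h]; ring
  rw [this]
  exact (continuous_const.sub continuous_id).sub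
    (continuous_mul_log.comp (continuous_const.sub continuous_id))

theorem hasDerivAt_h {x : ℝ} (hx : x < 1) : HasDerivAt h (log (1 - x)) x := by
  have hne : 1 - x ≠ 0 := by linarith
  have hsub : HasDerivAt (fun θ : ℝ => 1 - θ) (-1) x := by
    simpa using (hasDerivAt_id x).const_sub 1
  exact (hsub.mul ((hsub.log hne).const_sub 1)).congr_deriv (by field_simp; ring)

theorem h_zero : h 0 = 1 := by simp [h]

theorem h_one : h 1 = 0 := by simp [h]

theorem strictAntiOn_h : StrictAntiOn h (Icc 0 1) := by
  refine strictAntiOn_of_deriv_neg (convex_Icc 0 1) continuous_h.continuousOn fun x hx => ?_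
  rw [interior_Icc] at hx
  rw [(hasDerivAt_h hx.2).deriv]
  exact log_neg (by linarith [hx.2]) (by linarith [hx.1])

theorem strictMonoOn_one_sub_h_div_sq : StrictMonoOn (fun θ => (1 - h θ) / θ ^ 2) (Ioc 0 1) := by
  refine strictMonoOn_of_deriv_pos (convex_Ioc 0 1)
    ((continuous_const.sub continuous_h).continuousOn.div (by fun_prop)
      fun x hx => pow_ne_zero 2 hx.1.ne') fun x hx => ?_
  rw [interior_Ioc] at hx
  obtain ⟨hx0, hx1⟩ := hx
  have hd : HasDerivAt (fun θ => (1 - h θ) / θ ^ 2) _ x :=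
    ((hasDerivAt_h hx1).const_sub 1).div (hasDerivAt_pow 2 x) (pow_ne_zero 2 hx0.ne')
  rw [hd.deriv]
  have hlog := two_mul_div_two_sub_lt_neg_log_one_sub hx0 hx1
  rw [div_lt_iff₀ (by linarith)] at hlog
  refine div_pos ?_ (by positivity)
  simp only [h]
  push_cast
  nlinarith

theorem one_sub_sq_add_sq_mul_h_lt_h_mul {s θ : ℝ} (hs : s ∈ Ioo 0 1) (hθ : θ ∈ Ioc 0 1) :
    1 - s ^ 2 + s ^ 2 * h θ < h (s * θ) := by
  have hsθ : s * θ ∈ Ioc 0 1 :=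
    ⟨mul_pos hs.1 hθ.1, mul_le_one₀ hs.2.le hθ.1.le hθ.2⟩
  have hq := strictMonoOn_one_sub_h_div_sq hsθ hθ (mul_lt_of_lt_one_left hθ.1 hs.2)
  rw [div_lt_div_iff₀ (pow_pos hsθ.1 2) (pow_pos hθ.1 2), mul_pow, ← mul_assoc] at hq
  have := lt_of_mul_lt_mul_right hq (pow_pos hθ.1 2).le
  linarith

theorem exists_h_eq {p : ℝ} (hp : p ∈ Icc 0 1) : ∃ θ ∈ Icc (0 : ℝ) 1, h θ = p :=
  intermediate_value_Icc' zero_le_one continuous_h.continuousOn (by rwa [h_zero, h_one])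

theorem sqrt_one_sub_mul_lt_of_h_eq {k θ τ : ℝ} (hk : k ∈ Ioo 0 1) (hθ : θ ∈ Ioc 0 1)
    (hτ : τ ∈ Icc 0 1) (hkθ : k + (1 - k) * h θ = h τ) : √(1 - k) * θ < τ := by
  set s := √(1 - k)
  have hs2 : s ^ 2 = 1 - k := sq_sqrt (by linarith [hk.2])
  have hs : s ∈ Ioo 0 1 :=
    ⟨sqrt_pos.2 (by linarith [hk.2]), (sqrt_lt' one_pos).2 (by linarith [hk.1])⟩
  have hsθ : s * θ ∈ Icc 0 1 :=
    ⟨(mul_pos hs.1 hθ.1).le, mul_le_one₀ hs.2.le hθ.1.le hθ.2⟩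
  have hlt : h τ < h (s * θ) := by
    simpa only [← hkθ, hs2, sub_sub_cancel] using one_sub_sq_add_sq_mul_h_lt_h_mul hs hθ
  exact (strictAntiOn_h.lt_iff_gt hτ hsθ).1 hlt

/-- two-buyer seller-worst problem with asymmetric prior means
`p₁, p₂ ∈ (0,1)`: every maximizer of `(1−k)θ₁θ₂` over `k ∈ [0,1)`,
`θ₁,θ₂ ∈ [0,1]` subject to `k + (1−k)h(θᵢ) = pᵢ` has `k = 0`. -/
theorem stmt13 (p₁ p₂ : ℝ) (hp₁ : p₁ ∈ Set.Ioo (0:ℝ) 1)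
    (hp₂ : p₂ ∈ Set.Ioo (0:ℝ) 1) :
    ∀ k ∈ Set.Ico (0:ℝ) 1, ∀ θ₁ ∈ Set.Icc (0:ℝ) 1, ∀ θ₂ ∈ Set.Icc (0:ℝ) 1,
      k + (1 - k) * h θ₁ = p₁ →
      k + (1 - k) * h θ₂ = p₂ →
      (∀ k' ∈ Set.Ico (0:ℝ) 1, ∀ θ₁' ∈ Set.Icc (0:ℝ) 1, ∀ θ₂' ∈ Set.Icc (0:ℝ) 1,
        k' + (1 - k') * h θ₁' = p₁ →
        k' + (1 - k') * h θ₂' = p₂ →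
        (1 - k') * θ₁' * θ₂' ≤ (1 - k) * θ₁ * θ₂) →
      k = 0 := by
  intro k hk θ₁ hθ₁ θ₂ hθ₂ hc₁ hc₂ hmax
  by_contra hk0
  have hk' : k ∈ Ioo 0 1 := ⟨hk.1.lt_of_ne' hk0, hk.2⟩
  have hθ₁' : θ₁ ∈ Ioc 0 1 :=
    ⟨hθ₁.1.lt_of_ne (by rintro rfl; rw [h_zero] at hc₁; linarith [hp₁.2]), hθ₁.2⟩
  have hθ₂' : θ₂ ∈ Ioc 0 1 :=
    ⟨hθ₂.1.lt_of_ne (by rintro rfl; rw [h_zero] at hc₂; linarith [hp₂.2]), hθ₂.2⟩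
  obtain ⟨τ₁, hτ₁, rfl⟩ := exists_h_eq ⟨hp₁.1.le, hp₁.2.le⟩
  obtain ⟨τ₂, hτ₂, rfl⟩ := exists_h_eq ⟨hp₂.1.le, hp₂.2.le⟩
  have hτ : τ₁ * τ₂ ≤ (1 - k) * θ₁ * θ₂ := by
    simpa using hmax 0 ⟨le_rfl, one_pos⟩ τ₁ hτ₁ τ₂ hτ₂ (by simp) (by simp)
  have hlt₁ := sqrt_one_sub_mul_lt_of_h_eq hk' hθ₁' hτ₁ hc₁
  have hlt₂ := sqrt_one_sub_mul_lt_of_h_eq hk' hθ₂' hτ₂ hc₂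
  have hprod : (1 - k) * θ₁ * θ₂ = (√(1 - k) * θ₁) * (√(1 - k) * θ₂) := by
    rw [mul_mul_mul_comm, mul_self_sqrt (by linarith [hk.2]), mul_assoc]
  have := mul_lt_mul'' hlt₁ hlt₂ (by positivity [hθ₁'.1]) (by positivity [hθ₂'.1])
  linarith
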